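/- In the BSM-localization protocol, the joint outcome statistics reproduce the Born rule of the nonlocal Bell measurement: if qubits 1 (Alice) and 4 (Bob) are in an arbitrary two-qubit state |ψ⟩ and qubits 2 (Alice) and 3 (Bob) are in Φ⁺, then the probability that Alice's Bell measurement on (1,2) yields outcome a and Bob's Bell measurement on (3,4) yields outcome b equals (1/4)·|⟨B_c|ψ⟩|², where B_c is the (unique) Bell state with σ_c ∝ σ_a σ_b. -/

import Mathlib

open Matrix
open scoped Kronecker BigOperators ComplexOrder

noncomputable section

/-- Hermitian inner product (conjugate-linear in the first argument). -/
def dot {I : Type*} [Fintype I] (v w : I → ℂ) : ℂ := ∑ i, star (v i) * w i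

/-- Outer product |v⟩⟨v|. -/
def outer {I : Type*} (v : I → ℂ) : Matrix I I ℂ := fun i j => v i * star (v j)

def ket0 : Fin 2 → ℂ := fun i => if i = 0 then 1 else 0
def ket1 : Fin 2 → ℂ := fun i => if i = 1 then 1 else 0

/-- 1/√2 as a complex number. -/
def isq2 : ℂ := ((Real.sqrt 2)⁻¹ : ℝ)

def ketP : Fin 2 → ℂ := fun _ => isq2
def ketM : Fin 2 → ℂ := fun i => if i = 0 then isq2 else -isq2

/-- Tensor product of two qubit state vectors. -/
def tp (v w : Fin 2 → ℂ) : Fin 2 × Fin 2 → ℂ := fun p => v p.1 * w p.2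

/-- Partial trace over the first (Alice's) qubit; result acts on Bob's qubit. -/
def ptrA (ρ : Matrix (Fin 2 × Fin 2) (Fin 2 × Fin 2) ℂ) : Matrix (Fin 2) (Fin 2) ℂ :=
  fun b b' => ∑ a, ρ (a, b) (a, b')

/-- Partial trace over the second (Bob's) qubit; result acts on Alice's qubit. -/
def ptrB (ρ : Matrix (Fin 2 × Fin 2) (Fin 2 × Fin 2) ℂ) : Matrix (Fin 2) (Fin 2) ℂ :=
  fun a a' => ∑ b, ρ (a, b) (a', b)

/-- Nonselective ideal (Lüders) measurement channel in the orthonormal basis `e`. -/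
def measChan (e : Fin 4 → (Fin 2 × Fin 2 → ℂ))
    (ρ : Matrix (Fin 2 × Fin 2) (Fin 2 × Fin 2) ℂ) : Matrix (Fin 2 × Fin 2) (Fin 2 × Fin 2) ℂ :=
  ∑ i, outer (e i) * ρ * outer (e i)

/-- Pauli matrices. -/
def sx : Matrix (Fin 2) (Fin 2) ℂ := !![0, 1; 1, 0]
def sy : Matrix (Fin 2) (Fin 2) ℂ := !![0, -Complex.I; Complex.I, 0]
def sz : Matrix (Fin 2) (Fin 2) ℂ := !![1, 0; 0, -1]

def pauli : Fin 4 → Matrix (Fin 2) (Fin 2) ℂ := ![1, sx, sy, sz]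

/-- The Bell state Φ⁺ = (|00⟩+|11⟩)/√2. -/
def phiP : Fin 2 × Fin 2 → ℂ := fun p => if p.1 = p.2 then isq2 else 0

/-- Bell basis parametrized by Pauli operators: `bellP k = (I ⊗ σ_k) Φ⁺`. -/
def bellP (k : Fin 4) : Fin 2 × Fin 2 → ℂ := fun p => isq2 * pauli k p.2 p.1

/-- Explicit Bell basis in the order Φ⁺, Ψ⁺, Ψ⁻, Φ⁻. -/
def bPhiP : Fin 2 × Fin 2 → ℂ := fun p => if p.1 = p.2 then isq2 else 0
def bPhiM : Fin 2 × Fin 2 → ℂ := fun p => if p.1 = p.2 then (if p.1 = 0 then isq2 else -isq2) else 0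
def bPsiP : Fin 2 × Fin 2 → ℂ := fun p => if p.1 = p.2 then 0 else isq2
def bPsiM : Fin 2 × Fin 2 → ℂ := fun p => if p.1 = p.2 then 0 else (if p.1 = 0 then isq2 else -isq2)

def bellE : Fin 4 → (Fin 2 × Fin 2 → ℂ) := ![bPhiP, bPsiP, bPsiM, bPhiM]

/-- The twisted basis {|00⟩, |01⟩, |1+⟩, |1-⟩}. -/
def twisted : Fin 4 → (Fin 2 × Fin 2 → ℂ) := ![tp ket0 ket0, tp ket0 ket1, tp ket1 ketP, tp ket1 ketM]

/-- Amplitude that Alice's Bell measurement on qubits (1,2) yields outcome a and Bob's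
Bell measurement on (3,4) yields outcome b, when qubits (1,4) are in the state ψ and
qubits (2,3) are in Φ⁺. -/
def bsmLocAmp (ψ : Fin 2 × Fin 2 → ℂ) (a b : Fin 4) : ℂ :=
  ∑ q1 : Fin 2, ∑ q2 : Fin 2, ∑ q3 : Fin 2, ∑ q4 : Fin 2,
    star (bellP a (q1, q2)) * star (bellP b (q3, q4)) * (ψ (q1, q4) * phiP (q2, q3))

/-! Contracting the shared Φ⁺ composes the two Bell-state operators (the teleportation identity):
the amplitude is `½ ⟨(1 ⊗ σ_b σ_a) Φ⁺ | ψ⟩`. The Pauli matrices are self-adjoint involutions, so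
`σ_a σ_b = z σ_c` forces `σ_b σ_a = z̄ σ_c` and `|z| = 1`. -/

section PhaseOfProduct

variable {A : Type*} [Ring A] [StarRing A] [Algebra ℂ A] [StarModule ℂ A] {x y w : A} {z : ℂ}

theorem mul_comm_eq_star_smul_of_mul_eq_smul (hx : IsSelfAdjoint x) (hy : IsSelfAdjoint y)
    (hw : IsSelfAdjoint w) (h : x * y = z • w) : y * x = star z • w := by
  simpa [star_mul, hx.star_eq, hy.star_eq, hw.star_eq] using congrArg star h

theorem norm_eq_one_of_mul_eq_smul [Nontrivial A] (hx : IsSelfAdjoint x) (hy : IsSelfAdjoint y)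
    (hw : IsSelfAdjoint w) (hxx : x * x = 1) (hyy : y * y = 1) (hww : w * w = 1)
    (h : x * y = z • w) : ‖z‖ = 1 := by
  have hyx := mul_comm_eq_star_smul_of_mul_eq_smul hx hy hw h
  have hsmul : (z * star z) • (1 : A) = 1 :=
    calc (z * star z) • (1 : A) = (z • w) * (star z • w) := by
          rw [smul_mul_smul_comm, hww]
      _ = x * (y * y) * x := by rw [← h, ← hyx]; noncomm_ring
      _ = 1 := by rw [hyy, mul_one, hxx]
  have hz : z * star z = 1 :=
    (algebraMap ℂ A).injective (by rw [Algebra.algebraMap_eq_smul_one, hsmul, map_one])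
  have hnormSq : Complex.normSq z = 1 := by exact_mod_cast (Complex.mul_conj z).symm.trans hz
  rw [Complex.norm_def, hnormSq, Real.sqrt_one]

end PhaseOfProduct

theorem pauli_isSelfAdjoint (k : Fin 4) : IsSelfAdjoint (pauli k) := by
  fin_cases k <;> ext i j <;> fin_cases i <;> fin_cases j <;>
    simp [pauli, sx, sy, sz]

theorem pauli_mul_self (k : Fin 4) : pauli k * pauli k = 1 := by
  fin_cases k <;> ext i j <;> fin_cases i <;> fin_cases j <;>
    simp [pauli, sx, sy, sz, Matrix.mul_apply, Fin.sum_univ_two, Matrix.one_apply]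

theorem star_isq2 : star isq2 = isq2 := Complex.conj_ofReal _

theorem isq2_mul_self : isq2 * isq2 = 1 / 2 := by
  rw [isq2, ← Complex.ofReal_mul, ← mul_inv, Real.mul_self_sqrt zero_le_two]
  norm_num

/-- The vector `(1 ⊗ M) Φ⁺`. -/
def bellVec (M : Matrix (Fin 2) (Fin 2) ℂ) : Fin 2 × Fin 2 → ℂ := fun p => isq2 * M p.2 p.1

theorem bellP_eq_bellVec (k : Fin 4) : bellP k = bellVec (pauli k) := rfl

theorem dot_bellVec_smul (z : ℂ) (M : Matrix (Fin 2) (Fin 2) ℂ) (ψ : Fin 2 × Fin 2 → ℂ) :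
    dot (bellVec (z • M)) ψ = star z * dot (bellVec M) ψ := by
  simp only [dot, bellVec, Finset.mul_sum, Matrix.smul_apply, smul_eq_mul, star_mul]
  exact Finset.sum_congr rfl fun _ _ => by ring

theorem bsmLocAmp_eq_dot_bellVec (ψ : Fin 2 × Fin 2 → ℂ) (a b : Fin 4) :
    bsmLocAmp ψ a b = isq2 * isq2 * dot (bellVec (pauli b * pauli a)) ψ := by
  simp only [bsmLocAmp, dot, bellVec, bellP, phiP, Matrix.mul_apply, Fin.sum_univ_two,
    Fintype.sum_prod_type, star_mul', star_add, star_isq2, ↓reduceIte, zero_ne_one, one_ne_zero,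
    mul_zero, add_zero, zero_add]
  ring

theorem bsm_localization_born_rule_general (ψ : Fin 2 × Fin 2 → ℂ)
    (a b c : Fin 4) (hc : ∃ z : ℂ, z ≠ 0 ∧ pauli a * pauli b = z • pauli c) :
    ‖bsmLocAmp ψ a b‖ ^ 2 = (1 / 4) * ‖dot (bellP c) ψ‖ ^ 2 := by
  obtain ⟨z, -, h⟩ := hc
  have hba : pauli b * pauli a = star z • pauli c :=
    mul_comm_eq_star_smul_of_mul_eq_smul (pauli_isSelfAdjoint a) (pauli_isSelfAdjoint b)
      (pauli_isSelfAdjoint c) h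
  have hz : ‖z‖ = 1 :=
    norm_eq_one_of_mul_eq_smul (pauli_isSelfAdjoint a) (pauli_isSelfAdjoint b)
      (pauli_isSelfAdjoint c) (pauli_mul_self a) (pauli_mul_self b) (pauli_mul_self c) h
  rw [bsmLocAmp_eq_dot_bellVec, hba, dot_bellVec_smul, star_star, isq2_mul_self, norm_mul,
    norm_mul, hz, one_mul, mul_pow, bellP_eq_bellVec]
  norm_num

/-- the joint outcome statistics of the BSM-localization protocol reproduce
the Born rule of the nonlocal Bell measurement: Prob(a,b) = (1/4)·|⟨B_c|ψ⟩|² where B_c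
is the unique Bell state with σ_c ∝ σ_a σ_b. -/
theorem bsm_localization_born_rule (ψ : Fin 2 × Fin 2 → ℂ) (hψ : dot ψ ψ = 1)
    (a b c : Fin 4) (hc : ∃ z : ℂ, z ≠ 0 ∧ pauli a * pauli b = z • pauli c) :
    ‖bsmLocAmp ψ a b‖ ^ 2 = (1 / 4) * ‖dot (bellP c) ψ‖ ^ 2 :=
  bsm_localization_born_rule_general ψ a b c hc
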